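/- arXiv:2601.03612 — 2 statements merged into one kernel-verified Lean document; each statement's English description precedes it below -/
import Mathlib

section
/- (Lie–Trotter product formula) For bounded linear operators X and Y on a Banach space, the limit as n → ∞ of (exp(X/n) · exp(Y/n))ⁿ equals exp(X + Y) in operator norm. -/
open Filter Topology NormedSpace
open scoped Nat

/-! Put `S = exp(X/n) exp(Y/n)`, `T = exp((X+Y)/n)` and `c = ‖X‖ + ‖Y‖`. Then `Tⁿ = exp(X+Y)` and
`‖S‖, ‖T‖ ≤ exp(c/n)`. In `S - T` the terms of order at most one of the exponential series
cancel, so `‖S - T‖ = O(1/n²)`; the telescoping identity `Sⁿ⁺¹ - Tⁿ⁺¹ = S(Sⁿ - Tⁿ) + (S - T)Tⁿ`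
then gives `‖Sⁿ - Tⁿ‖ ≤ n exp(c) ‖S - T‖ = O(1/n)`. -/

theorem norm_pow_sub_pow_le {R : Type*} [NormedRing R] [NormOneClass R] {S T : R} {M : ℝ}
    (hS : ‖S‖ ≤ M) (hT : ‖T‖ ≤ M) (n : ℕ) :
    ‖S ^ n - T ^ n‖ ≤ n * M ^ (n - 1) * ‖S - T‖ := by
  have hM : 0 ≤ M := (norm_nonneg S).trans hS
  induction n with
  | zero => simp
  | succ n ih =>
    have htelescope : S ^ (n + 1) - T ^ (n + 1) = S * (S ^ n - T ^ n) + (S - T) * T ^ n := by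
      rw [pow_succ' S n, pow_succ' T n]; noncomm_ring
    have hTn : ‖T ^ n‖ ≤ M ^ n := (norm_pow_le T n).trans (pow_le_pow_left₀ (norm_nonneg T) hT n)
    have hMpow : M * (n * M ^ (n - 1)) = n * M ^ n := by
      rcases n with _ | n <;> simp [pow_succ]; ring
    calc ‖S ^ (n + 1) - T ^ (n + 1)‖
        ≤ ‖S‖ * ‖S ^ n - T ^ n‖ + ‖S - T‖ * ‖T ^ n‖ := by
          rw [htelescope]
          exact (norm_add_le _ _).trans (add_le_add (norm_mul_le _ _) (norm_mul_le _ _))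
      _ ≤ M * (n * M ^ (n - 1) * ‖S - T‖) + ‖S - T‖ * M ^ n := by gcongr
      _ = (n + 1 : ℕ) * M ^ (n + 1 - 1) * ‖S - T‖ := by
          simp only [add_tsub_cancel_right, Nat.cast_succ]
          linear_combination ‖S - T‖ * hMpow

namespace NormedSpace

variable {𝔸 : Type*} [NormedRing 𝔸] [NormedAlgebra ℚ 𝔸] [NormOneClass 𝔸] [CompleteSpace 𝔸]

theorem norm_exp_sub_sum_range_le (x : 𝔸) (k : ℕ) :
    ‖exp x - ∑ i ∈ Finset.range k, (i !⁻¹ : ℚ) • x ^ i‖ ≤ ‖x‖ ^ k * Real.exp ‖x‖ := by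
  have htail := (hasSum_nat_add_iff' k).mpr (exp_series_hasSum_exp' (𝕂 := ℚ) x)
  have hexp : HasSum (fun n ↦ ‖x‖ ^ k * (‖x‖ ^ n / n !)) (‖x‖ ^ k * Real.exp ‖x‖) := by
    rw [Real.exp_eq_exp_ℝ]
    exact (expSeries_div_hasSum_exp ‖x‖).mul_left _
  rw [← htail.tsum_eq]
  refine tsum_of_norm_bounded hexp fun n ↦ ?_
  have hfact : ((n + k)! : ℝ)⁻¹ ≤ (n ! : ℝ)⁻¹ :=
    inv_anti₀ (by positivity) (by exact_mod_cast Nat.factorial_le (Nat.le_add_right n k))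
  calc ‖((n + k)!⁻¹ : ℚ) • x ^ (n + k)‖ ≤ ((n + k)! : ℝ)⁻¹ * ‖x‖ ^ (n + k) := by
        rw [norm_smul, ← Rat.norm_cast_real]
        push_cast
        rw [norm_inv, RCLike.norm_natCast]
        gcongr
        exact norm_pow_le x _
    _ ≤ (n ! : ℝ)⁻¹ * ‖x‖ ^ (n + k) := by gcongr
    _ = ‖x‖ ^ k * (‖x‖ ^ n / n !) := by ring

theorem norm_exp_le (x : 𝔸) : ‖exp x‖ ≤ Real.exp ‖x‖ := by
  simpa using norm_exp_sub_sum_range_le x 0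

theorem norm_exp_sub_one_le (x : 𝔸) : ‖exp x - 1‖ ≤ ‖x‖ * Real.exp ‖x‖ := by
  simpa using norm_exp_sub_sum_range_le x 1

theorem norm_exp_sub_one_sub_self_le (x : 𝔸) :
    ‖exp x - 1 - x‖ ≤ ‖x‖ ^ 2 * Real.exp ‖x‖ := by
  simpa [Finset.sum_range_succ, sub_sub] using norm_exp_sub_sum_range_le x 2

theorem norm_exp_mul_exp_sub_exp_add_le (a b : 𝔸) :
    ‖exp a * exp b - exp (a + b)‖ ≤ 2 * (‖a‖ + ‖b‖) ^ 2 * Real.exp (‖a‖ + ‖b‖) := by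
  set r := ‖a‖ + ‖b‖
  have hdecomp : exp a * exp b - exp (a + b) = (exp a - 1) * (exp b - 1) + (exp a - 1 - a)
      + (exp b - 1 - b) - (exp (a + b) - 1 - (a + b)) := by noncomm_ring
  have hab : ‖a + b‖ ≤ r := norm_add_le a b
  have ha : ‖a‖ ≤ r := le_add_of_nonneg_right (norm_nonneg b)
  have hb : ‖b‖ ≤ r := le_add_of_nonneg_left (norm_nonneg a)
  calc ‖exp a * exp b - exp (a + b)‖
      ≤ ‖a‖ * Real.exp ‖a‖ * (‖b‖ * Real.exp ‖b‖) + ‖a‖ ^ 2 * Real.exp ‖a‖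
        + ‖b‖ ^ 2 * Real.exp ‖b‖ + ‖a + b‖ ^ 2 * Real.exp ‖a + b‖ := by
        rw [hdecomp]
        refine (norm_sub_le _ _).trans (add_le_add ((norm_add_le _ _).trans (add_le_add
          ((norm_add_le _ _).trans (add_le_add ?_ (norm_exp_sub_one_sub_self_le a)))
          (norm_exp_sub_one_sub_self_le b))) (norm_exp_sub_one_sub_self_le _))
        exact (norm_mul_le _ _).trans (by gcongr <;> exact norm_exp_sub_one_le _)
    _ ≤ (‖a‖ * ‖b‖ + ‖a‖ ^ 2 + ‖b‖ ^ 2 + r ^ 2) * Real.exp r := by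
        rw [mul_mul_mul_comm, ← Real.exp_add]
        simp only [add_mul]
        gcongr
    _ ≤ 2 * r ^ 2 * Real.exp r := by
        gcongr
        nlinarith [mul_nonneg (norm_nonneg a) (norm_nonneg b)]

theorem norm_pow_exp_mul_exp_sub_exp_add_pow_le (a b : 𝔸) (n : ℕ) :
    ‖(exp a * exp b) ^ n - exp (a + b) ^ n‖
      ≤ 2 * n * (‖a‖ + ‖b‖) ^ 2 * Real.exp (n * (‖a‖ + ‖b‖)) := by
  set r := ‖a‖ + ‖b‖
  have hprod : ‖exp a * exp b‖ ≤ Real.exp r :=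
    (norm_mul_le _ _).trans <| (Real.exp_add _ _).symm ▸
      mul_le_mul (norm_exp_le a) (norm_exp_le b) (norm_nonneg _) (Real.exp_nonneg _)
  have hsum : ‖exp (a + b)‖ ≤ Real.exp r :=
    (norm_exp_le _).trans (Real.exp_le_exp.2 (norm_add_le a b))
  calc ‖(exp a * exp b) ^ n - exp (a + b) ^ n‖
      ≤ n * Real.exp r ^ (n - 1) * (2 * r ^ 2 * Real.exp r) := by
        refine (norm_pow_sub_pow_le hprod hsum n).trans ?_
        gcongr
        exact norm_exp_mul_exp_sub_exp_add_le a b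
    _ = 2 * n * r ^ 2 * Real.exp (n * r) := by
        rcases eq_or_ne n 0 with rfl | hn
        · simp
        · rw [Real.exp_nat_mul, ← pow_sub_one_mul hn]; ring

end NormedSpace

/-- Lie–Trotter product formula: for bounded linear operators `X`, `Y` on a Banach space,
`(exp(X/n) · exp(Y/n))ⁿ → exp(X + Y)` as `n → ∞` (in operator norm). -/
theorem stmt12 {E : Type*} [NormedAddCommGroup E] [NormedSpace ℝ E] [CompleteSpace E]
    (X Y : E →L[ℝ] E) :
    Tendsto
      (fun n : ℕ =>
        (NormedSpace.exp ((1 / (n : ℝ)) • X) * NormedSpace.exp ((1 / (n : ℝ)) • Y)) ^ n)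
      atTop (𝓝 (NormedSpace.exp (X + Y))) := by
  rcases subsingleton_or_nontrivial E with hE | hE
  · exact tendsto_const_nhds.congr fun n ↦ Subsingleton.elim _ _
  let : NormedAlgebra ℚ (E →L[ℝ] E) := NormedAlgebra.restrictScalars ℚ ℝ _
  set c := ‖X‖ + ‖Y‖
  have hbound : ∀ n : ℕ, n ≠ 0 → ‖(exp ((1 / (n : ℝ)) • X) * exp ((1 / (n : ℝ)) • Y)) ^ n
      - exp (X + Y)‖ ≤ 2 * c ^ 2 * Real.exp c / n := by
    intro n hn
    have hpow : exp ((1 / (n : ℝ)) • X + (1 / (n : ℝ)) • Y) ^ n = exp (X + Y) := by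
      rw [← exp_nsmul, ← smul_add, ← Nat.cast_smul_eq_nsmul ℝ, smul_smul, mul_one_div_cancel
        (Nat.cast_ne_zero.2 hn), one_smul]
    have hnorm : ‖(1 / (n : ℝ)) • X‖ + ‖(1 / (n : ℝ)) • Y‖ = c / n := by
      rw [norm_smul, norm_smul, one_div, norm_inv, RCLike.norm_natCast]; ring
    calc _ = ‖(exp ((1 / (n : ℝ)) • X) * exp ((1 / (n : ℝ)) • Y)) ^ n
          - exp ((1 / (n : ℝ)) • X + (1 / (n : ℝ)) • Y) ^ n‖ := by rw [hpow]
      _ ≤ 2 * n * (c / n) ^ 2 * Real.exp (n * (c / n)) :=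
          hnorm ▸ norm_pow_exp_mul_exp_sub_exp_add_pow_le _ _ n
      _ = 2 * c ^ 2 * Real.exp c / n := by field_simp
  rw [tendsto_iff_norm_sub_tendsto_zero]
  exact squeeze_zero' (Eventually.of_forall fun n ↦ norm_nonneg _)
    (eventually_atTop.2 ⟨1, fun n hn ↦ hbound n (by omega)⟩)
    (tendsto_const_div_atTop_nhds_zero_nat _)
end

section
/- (Trotter error bound) For n×n real matrices X and Y, the operator norm of exp(X+Y) − (exp(X/n) exp(Y/n))ⁿ is bounded by (C / (2n)) · exp(‖X‖ + ‖Y‖), where C = ‖XY − YX‖ is the norm of the commutator. -/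
/-!
Interpolate `F s = exp (s • a) * exp (s • b) * exp ((1 - s) • (a + b))` between `exp (a + b)`
and `exp a * exp b`. Its derivative is `exp (s • a) * [a, exp (s • b)] * exp ((1 - s) • (a + b))`,
and the commutator `[a, exp (s • b)]` is itself `O(s ‖[a, b]‖)`, so one Trotter step with
`a = X / n`, `b = Y / n` costs `‖[X, Y]‖ / (2 n²) · exp ((‖X‖ + ‖Y‖) / n)`. Telescoping
`αⁿ - βⁿ` with `‖α‖, ‖β‖ ≤ exp ((‖X‖ + ‖Y‖) / n)` multiplies this by
`n · exp ((‖X‖ + ‖Y‖) (n - 1) / n)`.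
-/

open NormedSpace

section NormPow

variable {R : Type*} [NormedRing R]

theorem norm_pow_le_of_norm_one_le (h1 : ‖(1 : R)‖ ≤ 1) (x : R) : ∀ n : ℕ, ‖x ^ n‖ ≤ ‖x‖ ^ n
  | 0 => by simpa using h1
  | n + 1 => norm_pow_le' x n.succ_pos

theorem norm_pow_sub_pow_le_s13 (h1 : ‖(1 : R)‖ ≤ 1) {a b : R} {M : ℝ} (ha : ‖a‖ ≤ M)
    (hb : ‖b‖ ≤ M) (n : ℕ) : ‖a ^ n - b ^ n‖ ≤ n * M ^ (n - 1) * ‖a - b‖ := by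
  induction n with
  | zero => simp
  | succ n ih =>
    have hbn : ‖b ^ n‖ ≤ M ^ n :=
      (norm_pow_le_of_norm_one_le h1 b n).trans (pow_le_pow_left₀ (norm_nonneg b) hb n)
    have hsplit : a ^ (n + 1) - b ^ (n + 1) = a * (a ^ n - b ^ n) + (a - b) * b ^ n := by
      rw [pow_succ' a, pow_succ' b]; noncomm_ring
    calc ‖a ^ (n + 1) - b ^ (n + 1)‖
        ≤ ‖a‖ * ‖a ^ n - b ^ n‖ + ‖a - b‖ * ‖b ^ n‖ := by
          rw [hsplit]
          exact (norm_add_le _ _).trans (add_le_add (norm_mul_le _ _) (norm_mul_le _ _))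
      _ ≤ M * (n * M ^ (n - 1) * ‖a - b‖) + ‖a - b‖ * M ^ n := by
          gcongr
          exact (norm_nonneg a).trans ha
      _ = (n + 1 : ℕ) * M ^ n * ‖a - b‖ := by
          rcases n with _ | n
          · simp
          · simp only [Nat.add_sub_cancel, pow_succ]; push_cast; ring

end NormPow

theorem norm_sub_le_of_norm_deriv_le_mul {E : Type*} [NormedAddCommGroup E] [NormedSpace ℝ E]
    {f f' : ℝ → E} {K x : ℝ} (hx : 0 ≤ x) (hf : ∀ s ∈ Set.Icc 0 x, HasDerivAt f (f' s) s)
    (bound : ∀ s ∈ Set.Ico 0 x, ‖f' s‖ ≤ K * s) : ‖f x - f 0‖ ≤ K * x ^ 2 / 2 := by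
  have hB : ∀ s : ℝ, HasDerivAt (fun s => K * s ^ 2 / 2) (K * s) s := fun s =>
    (((hasDerivAt_pow 2 s).const_mul K).div_const 2).congr_deriv (by push_cast; ring)
  exact image_norm_le_of_norm_deriv_right_le_deriv_boundary (f := fun s => f s - f 0)
    (fun s hs => ((hf s hs).sub_const _).continuousAt.continuousWithinAt)
    (fun s hs => ((hf s (Set.Ico_subset_Icc_self hs)).sub_const _).hasDerivWithinAt)
    (by simp) hB bound ⟨hx, le_rfl⟩

section Exp

variable {𝔸 : Type*} [NormedRing 𝔸] [NormedAlgebra ℝ 𝔸]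

theorem norm_exp_le_exp_norm (h1 : ‖(1 : 𝔸)‖ ≤ 1) (x : 𝔸) : ‖exp x‖ ≤ Real.exp ‖x‖ := by
  rw [exp_eq_tsum ℝ, Real.exp_eq_exp_ℝ, exp_eq_tsum_div]
  refine (norm_tsum_le_tsum_norm (norm_expSeries_summable' x)).trans ?_
  refine Summable.tsum_le_tsum (fun n => ?_) (norm_expSeries_summable' x)
    (Real.summable_pow_div_factorial ‖x‖)
  rw [norm_smul, norm_inv, Real.norm_natCast, div_eq_inv_mul]
  exact mul_le_mul_of_nonneg_left (norm_pow_le_of_norm_one_le h1 x n) (by positivity)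

theorem norm_exp_smul_le (h1 : ‖(1 : 𝔸)‖ ≤ 1) (x : 𝔸) {t : ℝ} (ht : 0 ≤ t) :
    ‖exp (t • x)‖ ≤ Real.exp (t * ‖x‖) := by
  simpa [norm_smul, abs_of_nonneg ht] using norm_exp_le_exp_norm h1 (t • x)

variable [CompleteSpace 𝔸]

theorem exp_eq_exp_inv_smul_pow (x : 𝔸) {n : ℕ} (hn : n ≠ 0) :
    exp x = exp ((n : ℝ)⁻¹ • x) ^ n := by
  let : NormedAlgebra ℚ 𝔸 := .restrictScalars ℚ ℝ 𝔸
  rw [← exp_nsmul, ← Nat.cast_smul_eq_nsmul ℝ, smul_smul,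
    mul_inv_cancel₀ (Nat.cast_ne_zero.2 hn), one_smul]

theorem hasDerivAt_exp_const_sub_smul (x : 𝔸) (c t : ℝ) :
    HasDerivAt (fun u : ℝ => exp ((c - u) • x)) (-(x * exp ((c - t) • x))) t := by
  simpa [Function.comp_def] using
    (hasDerivAt_exp_smul_const' x (c - t)).scomp t ((hasDerivAt_id t).const_sub c)

theorem norm_commutator_exp_smul_le (h1 : ‖(1 : 𝔸)‖ ≤ 1) (a b : 𝔸) {s : ℝ} (hs : 0 ≤ s) :
    ‖a * exp (s • b) - exp (s • b) * a‖ ≤ s * ‖a * b - b * a‖ * Real.exp (s * ‖b‖) := by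
  -- `u ↦ exp (u • b) * a * exp ((s - u) • b)` moves `a` across `exp (s • b)`.
  have hderiv : ∀ u : ℝ, HasDerivAt (fun u : ℝ => exp (u • b) * a * exp ((s - u) • b))
      (exp (u • b) * (b * a - a * b) * exp ((s - u) • b)) u := fun u => by
    refine (((hasDerivAt_exp_smul_const b u).mul_const a).mul
      (hasDerivAt_exp_const_sub_smul b s u)).congr_deriv ?_
    noncomm_ring
  have hbound : ∀ u ∈ Set.Ico 0 s,
      ‖exp (u • b) * (b * a - a * b) * exp ((s - u) • b)‖ ≤
        ‖a * b - b * a‖ * Real.exp (s * ‖b‖) := fun u ⟨hu0, hus⟩ => by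
    calc ‖exp (u • b) * (b * a - a * b) * exp ((s - u) • b)‖
        ≤ ‖exp (u • b)‖ * ‖b * a - a * b‖ * ‖exp ((s - u) • b)‖ := norm_mul₃_le
      _ ≤ Real.exp (u * ‖b‖) * ‖a * b - b * a‖ * Real.exp ((s - u) * ‖b‖) := by
          rw [norm_sub_rev]
          gcongr
          · exact norm_exp_smul_le h1 b hu0
          · exact norm_exp_smul_le h1 b (sub_nonneg.2 hus.le)
      _ = ‖a * b - b * a‖ * Real.exp (s * ‖b‖) := by
          rw [mul_right_comm, ← Real.exp_add]; ring_nf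
  have key := norm_image_sub_le_of_norm_deriv_le_segment'
    (fun u _ => (hderiv u).hasDerivWithinAt) hbound s ⟨hs, le_rfl⟩
  simp only [zero_smul, exp_zero, one_mul, sub_zero, sub_self, mul_one] at key
  rw [norm_sub_rev]
  linarith

theorem norm_exp_add_sub_exp_mul_exp_le (h1 : ‖(1 : 𝔸)‖ ≤ 1) (a b : 𝔸) :
    ‖exp (a + b) - exp a * exp b‖ ≤ ‖a * b - b * a‖ / 2 * Real.exp (‖a‖ + ‖b‖) := by
  have hderiv : ∀ s : ℝ,
      HasDerivAt (fun s : ℝ => exp (s • a) * exp (s • b) * exp ((1 - s) • (a + b)))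
        (exp (s • a) * (a * exp (s • b) - exp (s • b) * a) * exp ((1 - s) • (a + b))) s :=
    fun s => (((hasDerivAt_exp_smul_const a s).mul (hasDerivAt_exp_smul_const b s)).mul
      (hasDerivAt_exp_const_sub_smul (a + b) 1 s)).congr_deriv
        (by simp only [Pi.mul_apply]; noncomm_ring)
  have hbound : ∀ s ∈ Set.Ico (0 : ℝ) 1,
      ‖exp (s • a) * (a * exp (s • b) - exp (s • b) * a) * exp ((1 - s) • (a + b))‖ ≤
        ‖a * b - b * a‖ * Real.exp (‖a‖ + ‖b‖) * s := fun s ⟨hs0, hs1⟩ => by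
    have hab : ‖exp ((1 - s) • (a + b))‖ ≤ Real.exp ((1 - s) * (‖a‖ + ‖b‖)) :=
      (norm_exp_smul_le h1 (a + b) (by linarith)).trans
        (Real.exp_le_exp.2 (mul_le_mul_of_nonneg_left (norm_add_le a b) (by linarith)))
    calc ‖exp (s • a) * (a * exp (s • b) - exp (s • b) * a) * exp ((1 - s) • (a + b))‖
        ≤ ‖exp (s • a)‖ * ‖a * exp (s • b) - exp (s • b) * a‖ *
            ‖exp ((1 - s) • (a + b))‖ := norm_mul₃_le
      _ ≤ Real.exp (s * ‖a‖) * (s * ‖a * b - b * a‖ * Real.exp (s * ‖b‖)) *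
            Real.exp ((1 - s) * (‖a‖ + ‖b‖)) := by
          gcongr
          · exact norm_exp_smul_le h1 a hs0
          · exact norm_commutator_exp_smul_le h1 a b hs0
      _ = ‖a * b - b * a‖ * Real.exp (‖a‖ + ‖b‖) * s := by
          rw [mul_left_comm, mul_assoc, ← Real.exp_add, mul_right_comm, ← Real.exp_add]
          ring_nf
  have key := norm_sub_le_of_norm_deriv_le_mul zero_le_one (fun s _ => hderiv s) hbound
  simp only [zero_smul, one_smul, exp_zero, one_mul, sub_zero, sub_self, mul_one] at key
  rw [norm_sub_rev]
  linarith

theorem norm_exp_add_sub_trotter_pow_le (h1 : ‖(1 : 𝔸)‖ ≤ 1) (x y : 𝔸) {n : ℕ} (hn : n ≠ 0) :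
    ‖exp (x + y) - (exp ((n : ℝ)⁻¹ • x) * exp ((n : ℝ)⁻¹ • y)) ^ n‖ ≤
      ‖x * y - y * x‖ / (2 * n) * Real.exp (‖x‖ + ‖y‖) := by
  set t : ℝ := (n : ℝ)⁻¹
  have ht : 0 ≤ t := by positivity
  have hnt : (n : ℝ) * t = 1 := mul_inv_cancel₀ (Nat.cast_ne_zero.2 hn)
  set M := Real.exp (t * (‖x‖ + ‖y‖))
  have hnorm : ‖t • x‖ + ‖t • y‖ = t * (‖x‖ + ‖y‖) := by
    rw [norm_smul, norm_smul, Real.norm_of_nonneg ht, mul_add]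
  have hsum : ‖exp (t • x + t • y)‖ ≤ M :=
    (norm_exp_le_exp_norm h1 _).trans (Real.exp_le_exp.2 (hnorm ▸ norm_add_le _ _))
  have hprod : ‖exp (t • x) * exp (t • y)‖ ≤ M :=
    calc ‖exp (t • x) * exp (t • y)‖ ≤ Real.exp ‖t • x‖ * Real.exp ‖t • y‖ :=
          norm_mul_le_of_le (norm_exp_le_exp_norm h1 _) (norm_exp_le_exp_norm h1 _)
      _ = M := by rw [← Real.exp_add, hnorm]
  have hstep : ‖exp (t • x + t • y) - exp (t • x) * exp (t • y)‖ ≤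
      t ^ 2 * ‖x * y - y * x‖ / 2 * M := by
    refine (norm_exp_add_sub_exp_mul_exp_le h1 _ _).trans_eq ?_
    rw [smul_mul_smul_comm, smul_mul_smul_comm, ← smul_sub, norm_smul, hnorm,
      Real.norm_of_nonneg (by positivity), sq]
  calc ‖exp (x + y) - (exp (t • x) * exp (t • y)) ^ n‖
      = ‖exp (t • x + t • y) ^ n - (exp (t • x) * exp (t • y)) ^ n‖ := by
        rw [exp_eq_exp_inv_smul_pow (x + y) hn, smul_add]
    _ ≤ n * M ^ (n - 1) * (t ^ 2 * ‖x * y - y * x‖ / 2 * M) := by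
        refine (norm_pow_sub_pow_le_s13 h1 hsum hprod n).trans ?_
        exact mul_le_mul_of_nonneg_left hstep (by positivity)
    _ = ‖x * y - y * x‖ / (2 * n) * M ^ n := by
        rw [← pow_sub_one_mul hn M]
        field_simp
        linear_combination (M ^ (n - 1) * ‖x * y - y * x‖ * M * (n * t + 1)) * hnt
    _ = ‖x * y - y * x‖ / (2 * n) * Real.exp (‖x‖ + ‖y‖) := by
        rw [← Real.exp_nat_mul, ← mul_assoc, hnt, one_mul]

end Exp

/-- Trotter error bound: for bounded operators `X`, `Y` (e.g. `n×n` real matrices acting on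
Euclidean space, with the operator norm) and `n ≥ 1` Trotter steps,
`‖exp(X+Y) − (exp(X/n)·exp(Y/n))ⁿ‖ ≤ (C/(2n)) · exp(‖X‖ + ‖Y‖)` where `C = ‖XY − YX‖`. -/
theorem stmt13 {k : ℕ}
    (X Y : EuclideanSpace ℝ (Fin k) →L[ℝ] EuclideanSpace ℝ (Fin k))
    (n : ℕ) (hn : 1 ≤ n) (C : ℝ) (hC : C = ‖X * Y - Y * X‖) :
    ‖NormedSpace.exp (X + Y) -
        (NormedSpace.exp ((1 / (n : ℝ)) • X) * NormedSpace.exp ((1 / (n : ℝ)) • Y)) ^ n‖ ≤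
      C / (2 * n) * Real.exp (‖X‖ + ‖Y‖) := by
  simpa only [one_div, hC] using
    norm_exp_add_sub_trotter_pow_le ContinuousLinearMap.norm_id_le X Y (by omega : n ≠ 0)
end
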